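/- arXiv:2106.07736 — 3 statements merged into one kernel-verified Lean document; each statement's English description precedes it below -/
import Mathlib

section
/- Let A ∈ ℝ^{p×r} (1 ≤ r ≤ p) have orthonormal columns a_1,…,a_r, i.e. AᵀA = I_r. Then for every q ∈ ℝ^p with ‖q‖₂ = 1 one has ‖Aᵀq‖₄⁴ ≤ 1, and ‖Aᵀq‖₄⁴ = 1 holds if and only if q = a_i or q = −a_i for some i ∈ {1,…,r}. Consequently, the maximizers of ‖Aᵀq‖₄⁴ over the unit sphere are exactly the signed columns of A. -/
open Matrix MeasureTheory ProbabilityTheory Real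
open scoped BigOperators ENNReal

noncomputable section

/-- squared Euclidean norm -/
def l2sq {m : ℕ} (v : Fin m → ℝ) : ℝ := ∑ i, v i ^ 2

/-- fourth power of the ℓ₄ norm -/
def l4p4 {m : ℕ} (v : Fin m → ℝ) : ℝ := ∑ i, v i ^ 4

/-- Euclidean norm -/
def l2norm {m : ℕ} (v : Fin m → ℝ) : ℝ := Real.sqrt (l2sq v)

/-- squared sup-norm -/
def linfSq {m : ℕ} (v : Fin m → ℝ) : ℝ := ⨆ i, (v i) ^ 2

/-- projection onto the orthogonal complement of q -/
def proj {p : ℕ} (q : Fin p → ℝ) : Matrix (Fin p) (Fin p) ℝ := 1 - Matrix.vecMulVec q q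

def zeta {p r : ℕ} (A : Matrix (Fin p) (Fin r) ℝ) (q : Fin p → ℝ) : Fin r → ℝ := Aᵀ *ᵥ q

/-- population objective -/
def fpop {p r : ℕ} (θ : ℝ) (A : Matrix (Fin p) (Fin r) ℝ) (q : Fin p → ℝ) : ℝ :=
  -(1/4) * ((1 - θ) * l4p4 (zeta A q) + θ * (l2sq (zeta A q)) ^ 2)

/-- Riemannian gradient of the population objective -/
def gradf {p r : ℕ} (θ : ℝ) (A : Matrix (Fin p) (Fin r) ℝ) (q : Fin p → ℝ) : Fin p → ℝ :=
  -((proj q) *ᵥ ((1 - θ) • (A *ᵥ fun j => (zeta A q j) ^ 3)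
      + (θ * l2sq (zeta A q)) • (A *ᵥ zeta A q)))

/-- Riemannian Hessian of the population objective -/
def hessf {p r : ℕ} (θ : ℝ) (A : Matrix (Fin p) (Fin r) ℝ) (q : Fin p → ℝ) :
    Matrix (Fin p) (Fin p) ℝ :=
  -((1 - θ) • (proj q *
      ((3 : ℝ) • (A * Matrix.diagonal (fun j => (zeta A q j) ^ 2) * Aᵀ)
        - l4p4 (zeta A q) • (1 : Matrix (Fin p) (Fin p) ℝ)) * proj q))
  - θ • (proj q *
      (l2sq (zeta A q) • (A * Aᵀ)
        + (2 : ℝ) • (A * Aᵀ * Matrix.vecMulVec q q * (A * Aᵀ))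
        - (l2sq (zeta A q)) ^ 2 • (1 : Matrix (Fin p) (Fin p) ℝ)) * proj q)

/-- quadratic form -/
def qform {p : ℕ} (M : Matrix (Fin p) (Fin p) ℝ) (v : Fin p → ℝ) : ℝ := v ⬝ᵥ (M *ᵥ v)

/-- α(q) -/
def alphaf {p r : ℕ} (θ : ℝ) (A : Matrix (Fin p) (Fin r) ℝ) (q : Fin p → ℝ) : ℝ :=
  l4p4 (zeta A q) + (θ / (1 - θ)) * ((l2sq (zeta A q)) ^ 2 - l2sq (zeta A q))

/-- columns of X -/
def colX {r n : ℕ} (X : Matrix (Fin r) (Fin n) ℝ) (k : Fin n) : Fin r → ℝ := fun i => X i k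

/-- finite-sample objective -/
def Ffun {p r n : ℕ} (θ σ : ℝ) (A : Matrix (Fin p) (Fin r) ℝ) (X : Matrix (Fin r) (Fin n) ℝ)
    (q : Fin p → ℝ) : ℝ :=
  -(1 / (12 * θ * σ ^ 4 * n)) * ∑ k : Fin n, (q ⬝ᵥ (A *ᵥ colX X k)) ^ 4

/-- Riemannian gradient of the finite-sample objective -/
def gradF {p r n : ℕ} (θ σ : ℝ) (A : Matrix (Fin p) (Fin r) ℝ) (X : Matrix (Fin r) (Fin n) ℝ)
    (q : Fin p → ℝ) : Fin p → ℝ :=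
  (-(1 / (3 * θ * σ ^ 4 * n))) •
    ((proj q) *ᵥ ∑ k : Fin n, ((q ⬝ᵥ (A *ᵥ colX X k)) ^ 3) • (A *ᵥ colX X k))

/-- Riemannian Hessian of the finite-sample objective -/
def hessF {p r n : ℕ} (θ σ : ℝ) (A : Matrix (Fin p) (Fin r) ℝ) (X : Matrix (Fin r) (Fin n) ℝ)
    (q : Fin p → ℝ) : Matrix (Fin p) (Fin p) ℝ :=
  (-(1 / (3 * θ * σ ^ 4 * n))) •
    ∑ k : Fin n, proj q *
      ((3 * (q ⬝ᵥ (A *ᵥ colX X k)) ^ 2) • Matrix.vecMulVec (A *ᵥ colX X k) (A *ᵥ colX X k)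
        - ((q ⬝ᵥ (A *ᵥ colX X k)) ^ 4) • (1 : Matrix (Fin p) (Fin p) ℝ)) * proj q

/-- spectral norm of a rectangular matrix -/
def opNorm {m n : ℕ} (M : Matrix (Fin m) (Fin n) ℝ) : ℝ :=
  ‖LinearMap.toContinuousLinearMap (Matrix.toEuclideanLin M)‖

/-- Bernoulli(θ) law on ℝ -/
def bernoulliReal (θ : ℝ) : Measure ℝ :=
  ENNReal.ofReal θ • Measure.dirac (1 : ℝ) + ENNReal.ofReal (1 - θ) • Measure.dirac (0 : ℝ)

/-- Bernoulli–Gaussian law BG(θ, σ²) on ℝ -/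
def bgLaw (θ σ2 : ℝ) : Measure ℝ :=
  ((bernoulliReal θ).prod (gaussianReal 0 σ2.toNNReal)).map fun p => p.1 * p.2

/-- law of a random vector in ℝ^r with i.i.d. BG(θ, σ²) entries -/
def bgVec (r : ℕ) (θ σ2 : ℝ) : Measure (Fin r → ℝ) :=
  Measure.pi fun _ : Fin r => bgLaw θ σ2

/-- law of a random r×n matrix with i.i.d. BG(θ, σ²) entries -/
def bgMatrix (r n : ℕ) (θ σ2 : ℝ) : Measure (Fin r → Fin n → ℝ) :=
  Measure.pi fun _ : Fin r => Measure.pi fun _ : Fin n => bgLaw θ σ2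


/-! The estimate is `‖Aᵀq‖₄⁴ ≤ ‖Aᵀq‖₂⁴ ≤ ‖q‖₂⁴ = 1`: the first step bounds each `v_j⁴` by
`v_j² ‖v‖₂²`, the second is Bessel's inequality for the orthonormal columns of `A`.
Equality in the first step forces `Aᵀq` to have a single nonzero entry `±1`, and equality
in the second forces `q = A Aᵀ q`, i.e. `q` is the corresponding signed column. -/

section SumPowFour

variable {ι : Type*} {s : Finset ι} (f : ι → ℝ)

theorem Finset.pow_four_le_sq_mul_sum_sq {i : ι} (hi : i ∈ s) :
    f i ^ 4 ≤ f i ^ 2 * ∑ j ∈ s, f j ^ 2 := by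
  rw [show f i ^ 4 = f i ^ 2 * f i ^ 2 by ring]
  exact mul_le_mul_of_nonneg_left
    (Finset.single_le_sum (fun j _ => sq_nonneg (f j)) hi) (sq_nonneg _)

variable (s)

theorem Finset.sum_pow_four_le_sq_sum_sq :
    ∑ i ∈ s, f i ^ 4 ≤ (∑ i ∈ s, f i ^ 2) ^ 2 := by
  calc ∑ i ∈ s, f i ^ 4 ≤ ∑ i ∈ s, f i ^ 2 * ∑ j ∈ s, f j ^ 2 :=
        Finset.sum_le_sum fun i hi => Finset.pow_four_le_sq_mul_sum_sq f hi
    _ = (∑ i ∈ s, f i ^ 2) ^ 2 := by rw [← Finset.sum_mul, sq]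

/-- Equality forces `f i ^ 4 = f i ^ 2 * ∑ f²` termwise, so a nonzero `f i` carries all
of `∑ f²`. -/
theorem Finset.eq_zero_of_sum_pow_four_eq_sq_sum_sq [DecidableEq ι]
    (h : ∑ i ∈ s, f i ^ 4 = (∑ i ∈ s, f i ^ 2) ^ 2) {i j : ι} (hi : i ∈ s) (hj : j ∈ s)
    (hij : i ≠ j) (hfi : f i ≠ 0) : f j = 0 := by
  set S := ∑ k ∈ s, f k ^ 2
  have hsum : ∑ k ∈ s, f k ^ 4 = ∑ k ∈ s, f k ^ 2 * S := by
    rw [h, ← Finset.sum_mul, sq]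
  have hSi : S = f i ^ 2 := by
    have hterm := (Finset.sum_eq_sum_iff_of_le fun k hk =>
      Finset.pow_four_le_sq_mul_sum_sq f hk).mp hsum i hi
    apply mul_left_cancel₀ (pow_ne_zero 2 hfi)
    linear_combination -hterm
  have hpair : f i ^ 2 + f j ^ 2 ≤ S := by
    rw [← Finset.sum_pair hij (f := fun k => f k ^ 2)]
    exact Finset.sum_le_sum_of_subset_of_nonneg (by simp [Finset.insert_subset_iff, hi, hj])
      fun k _ _ => sq_nonneg (f k)
  exact pow_eq_zero_iff two_ne_zero |>.mp (by nlinarith [sq_nonneg (f j)])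

end SumPowFour

theorem Matrix.mulVec_single_eq {m n R : Type*} [Fintype n] [DecidableEq n] [CommSemiring R]
    (A : Matrix m n R) (i : n) (c : R) : A *ᵥ Pi.single i c = fun k => c * A k i := by
  rw [mulVec_single]
  ext k
  simp [mul_comm]

section Norms

variable {m : ℕ}

theorem l2sq_nonneg (v : Fin m → ℝ) : 0 ≤ l2sq v :=
  Finset.sum_nonneg fun _ _ => sq_nonneg _

theorem l2sq_eq_dotProduct (v : Fin m → ℝ) : l2sq v = v ⬝ᵥ v := by
  simp only [l2sq, dotProduct, sq]

theorem l2sq_single (i : Fin m) (c : ℝ) : l2sq (Pi.single i c) = c ^ 2 := by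
  simp [l2sq, Pi.single_apply]

theorem l4p4_single (i : Fin m) (c : ℝ) : l4p4 (Pi.single i c) = c ^ 4 := by
  simp [l4p4, Pi.single_apply]

theorem l4p4_le_sq_l2sq (v : Fin m → ℝ) : l4p4 v ≤ l2sq v ^ 2 :=
  Finset.sum_pow_four_le_sq_sum_sq _ v

theorem eq_single_of_l4p4_eq_sq_l2sq {v : Fin m → ℝ} (h : l4p4 v = l2sq v ^ 2) {i : Fin m}
    (hi : v i ≠ 0) : v = Pi.single i (v i) := by
  funext j
  rcases eq_or_ne j i with rfl | hji
  · simp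
  · rw [Pi.single_eq_of_ne hji]
    exact Finset.eq_zero_of_sum_pow_four_eq_sq_sum_sq _ v h (Finset.mem_univ i)
      (Finset.mem_univ j) hji.symm hi

end Norms

section OrthonormalColumns

variable {p r : ℕ} {A : Matrix (Fin p) (Fin r) ℝ}

theorem zeta_mulVec (hA : Aᵀ * A = 1) (v : Fin r → ℝ) : zeta A (A *ᵥ v) = v := by
  rw [zeta, mulVec_mulVec, hA, one_mulVec]

theorem l2sq_sub_mulVec_zeta (hA : Aᵀ * A = 1) (q : Fin p → ℝ) :
    l2sq (q - A *ᵥ zeta A q) = l2sq q - l2sq (zeta A q) := by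
  have hcross : q ⬝ᵥ A *ᵥ zeta A q = zeta A q ⬝ᵥ zeta A q := by
    rw [dotProduct_mulVec, ← mulVec_transpose, zeta]
  have hsq : A *ᵥ zeta A q ⬝ᵥ A *ᵥ zeta A q = zeta A q ⬝ᵥ zeta A q := by
    rw [dotProduct_mulVec, ← mulVec_transpose, mulVec_mulVec, hA, one_mulVec]
  simp only [l2sq_eq_dotProduct, sub_dotProduct, dotProduct_sub, hcross, hsq,
    dotProduct_comm (A *ᵥ zeta A q) q]
  ring

theorem l2sq_zeta_le (hA : Aᵀ * A = 1) (q : Fin p → ℝ) : l2sq (zeta A q) ≤ l2sq q := by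
  have hbessel := l2sq_sub_mulVec_zeta hA q
  have hres := l2sq_nonneg (q - A *ᵥ zeta A q)
  linarith

theorem eq_mulVec_zeta_of_l2sq_eq (hA : Aᵀ * A = 1) {q : Fin p → ℝ}
    (h : l2sq (zeta A q) = l2sq q) : q = A *ᵥ zeta A q := by
  have h0 : l2sq (q - A *ᵥ zeta A q) = 0 := by rw [l2sq_sub_mulVec_zeta hA, h, sub_self]
  rwa [l2sq_eq_dotProduct, dotProduct_self_eq_zero, sub_eq_zero] at h0

end OrthonormalColumns

theorem stmt0_general (p r : ℕ)
    (A : Matrix (Fin p) (Fin r) ℝ) (hA : Aᵀ * A = 1) :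
    ∀ q : Fin p → ℝ, l2sq q = 1 →
      l4p4 (zeta A q) ≤ 1 ∧
      (l4p4 (zeta A q) = 1 ↔
        ∃ i : Fin r, q = (fun k => A k i) ∨ q = (fun k => -A k i)) := by
  intro q hq
  set v := zeta A q with hv
  have hv_nonneg := l2sq_nonneg v
  have hv_le : l2sq v ≤ 1 := hq ▸ l2sq_zeta_le hA q
  refine ⟨(l4p4_le_sq_l2sq v).trans (by nlinarith), fun h1 => ?_, ?_⟩
  · have hv1 : l2sq v = 1 := by nlinarith [l4p4_le_sq_l2sq v]
    obtain ⟨i, hi⟩ : ∃ i, v i ≠ 0 := by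
      by_contra! hzero
      simp [l2sq, hzero] at hv1
    have hsingle := eq_single_of_l4p4_eq_sq_l2sq (by rw [h1, hv1, one_pow]) hi
    have hq_eq : q = fun k => v i * A k i := by
      rw [← mulVec_single_eq, ← hsingle]
      exact eq_mulVec_zeta_of_l2sq_eq hA (hv1.trans hq.symm)
    have hvi : v i = 1 ∨ v i = -1 := by
      rw [hsingle, l2sq_single] at hv1
      exact sq_eq_one_iff.mp hv1
    refine ⟨i, hvi.imp (fun h => ?_) (fun h => ?_)⟩ <;> simp [hq_eq, h]
  · rintro ⟨i, rfl | rfl⟩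
    · rw [hv, show (fun k => A k i) = A *ᵥ Pi.single i 1 by rw [mulVec_single_eq]; simp,
        zeta_mulVec hA, l4p4_single, one_pow]
    · rw [hv, show (fun k => -A k i) = A *ᵥ Pi.single i (-1) by rw [mulVec_single_eq]; simp,
        zeta_mulVec hA, l4p4_single]
      norm_num

theorem stmt0 (p r : ℕ) (hr : 1 ≤ r) (hrp : r ≤ p)
    (A : Matrix (Fin p) (Fin r) ℝ) (hA : Aᵀ * A = 1) :
    ∀ q : Fin p → ℝ, l2sq q = 1 →
      l4p4 (zeta A q) ≤ 1 ∧
      (l4p4 (zeta A q) = 1 ↔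
        ∃ i : Fin r, q = (fun k => A k i) ∨ q = (fun k => -A k i)) :=
  stmt0_general p r A hA
end
end

section
/- Let x = (x_1,…,x_r) be a random vector in ℝ^r with i.i.d. BG(θ,σ²) entries, where θ ∈ (0,1] and σ > 0. Then for every ζ ∈ ℝ^r, E[(ζᵀx)⁴] = 3σ⁴θ[(1−θ)‖ζ‖₄⁴ + θ‖ζ‖₂⁴]. Equivalently, for q on the unit sphere of ℝ^p and A ∈ ℝ^{p×r}, E[−(1/(12θσ⁴))(qᵀAx)⁴] = −(1/4)[(1−θ)‖Aᵀq‖₄⁴ + θ‖Aᵀq‖₂⁴]. -/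
/-!
Write `x = (x₀, x')`. Expanding `(ζ₀x₀ + ζ'ᵀx')⁴` binomially, every term of the product integral
factors into a moment of `x₀` times a moment of `ζ'ᵀx'`. The odd moments of a Bernoulli–Gaussian
variable vanish, so induction on `r` gives `E[(ζᵀx)⁴] = m₄‖ζ‖₄⁴ + 3m₂²(‖ζ‖₂⁴ - ‖ζ‖₄⁴)`.
For `k ≥ 1` the `k`-th moment of `b·z` is `θ E[zᵏ]`, and the Gaussian moments `E[z²] = σ²`,
`E[z³] = 0`, `E[z⁴] = 3σ⁴` are the derivatives at `0` of the moment generating function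
`exp (σ²t²/2)`; hence `m₂ = θσ²` and `m₄ = 3θσ⁴`.
-/

open Matrix MeasureTheory ProbabilityTheory Real
open scoped BigOperators ENNReal

noncomputable section

open scoped NNReal

lemma deriv_mul_exp_mul_sq (a : ℝ) {P P' : ℝ → ℝ} (hP : ∀ t, HasDerivAt P (P' t) t) :
    deriv (fun t => P t * exp (a * t ^ 2))
      = fun t => (P' t + 2 * a * t * P t) * exp (a * t ^ 2) := by
  ext t
  refine ((hP t).mul ((hasDerivAt_pow 2 t).const_mul a).exp).deriv.trans ?_
  push_cast
  ring

lemma iteratedDeriv_exp_mul_sq_zero (a : ℝ) :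
    iteratedDeriv 2 (fun t => exp (a * t ^ 2)) 0 = 2 * a ∧
    iteratedDeriv 3 (fun t => exp (a * t ^ 2)) 0 = 0 ∧
    iteratedDeriv 4 (fun t => exp (a * t ^ 2)) 0 = 12 * a ^ 2 := by
  have d0 : deriv (fun t => exp (a * t ^ 2)) = fun t => 2 * a * t * exp (a * t ^ 2) := by
    simpa using deriv_mul_exp_mul_sq a fun t => hasDerivAt_const t (1 : ℝ)
  have d1 : deriv (fun t => 2 * a * t * exp (a * t ^ 2))
      = fun t => (2 * a + 4 * a ^ 2 * t ^ 2) * exp (a * t ^ 2) := by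
    rw [deriv_mul_exp_mul_sq a (P := fun t => 2 * a * t) fun t =>
      (hasDerivAt_id t).const_mul (2 * a)]
    ext t; ring
  have d2 : deriv (fun t => (2 * a + 4 * a ^ 2 * t ^ 2) * exp (a * t ^ 2))
      = fun t => (12 * a ^ 2 * t + 8 * a ^ 3 * t ^ 3) * exp (a * t ^ 2) := by
    rw [deriv_mul_exp_mul_sq a fun t =>
      ((hasDerivAt_pow 2 t).const_mul (4 * a ^ 2)).const_add (2 * a)]
    ext t; push_cast; ring
  have d3 : deriv (fun t => (12 * a ^ 2 * t + 8 * a ^ 3 * t ^ 3) * exp (a * t ^ 2))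
      = fun t => (12 * a ^ 2 + 48 * a ^ 3 * t ^ 2 + 16 * a ^ 4 * t ^ 4) * exp (a * t ^ 2) := by
    rw [deriv_mul_exp_mul_sq a (P := fun t => 12 * a ^ 2 * t + 8 * a ^ 3 * t ^ 3) fun t =>
      ((hasDerivAt_id t).const_mul (12 * a ^ 2)).add ((hasDerivAt_pow 3 t).const_mul (8 * a ^ 3))]
    ext t; push_cast; ring
  refine ⟨?_, ?_, ?_⟩ <;> simp [iteratedDeriv_succ', d0, d1, d2, d3]

lemma integral_pow_gaussianReal_eq_iteratedDeriv (v : ℝ≥0) (n : ℕ) :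
    ∫ x, x ^ n ∂gaussianReal 0 v = iteratedDeriv n (fun t => exp (v / 2 * t ^ 2)) 0 := by
  have h := iteratedDeriv_mgf_zero (X := fun x => x) (μ := gaussianReal 0 v) (by simp) n
  rw [mgf_fun_id_gaussianReal] at h
  refine h.symm.trans ?_
  congr 2 with t
  ring_nf

lemma integrable_pow_gaussianReal (v : ℝ≥0) (n : ℕ) :
    Integrable (fun x => x ^ n) (gaussianReal 0 v) :=
  integrable_pow_of_mem_interior_integrableExpSet (by simp) n

lemma moments_gaussianReal_zero (v : ℝ≥0) :
    ∫ x, x ^ 2 ∂gaussianReal 0 v = v ∧ ∫ x, x ^ 3 ∂gaussianReal 0 v = 0 ∧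
      ∫ x, x ^ 4 ∂gaussianReal 0 v = 3 * v ^ 2 := by
  obtain ⟨d2, d3, d4⟩ := iteratedDeriv_exp_mul_sq_zero ((v : ℝ) / 2)
  have h := integral_pow_gaussianReal_eq_iteratedDeriv v
  exact ⟨by rw [h 2, d2]; ring, by rw [h 3, d3], by rw [h 4, d4]; ring⟩

lemma isProbabilityMeasure_bernoulliReal {θ : ℝ} (h0 : 0 ≤ θ) (h1 : θ ≤ 1) :
    IsProbabilityMeasure (bernoulliReal θ) := by
  constructor
  simp only [bernoulliReal, Measure.add_apply, Measure.smul_apply, measure_univ, smul_eq_mul,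
    mul_one]
  rw [← ENNReal.ofReal_add h0 (by linarith), add_sub_cancel, ENNReal.ofReal_one]

lemma integrable_bernoulliReal (θ : ℝ) (g : ℝ → ℝ) : Integrable g (bernoulliReal θ) :=
  ((integrable_dirac enorm_lt_top).smul_measure ENNReal.ofReal_ne_top).add_measure
    ((integrable_dirac enorm_lt_top).smul_measure ENNReal.ofReal_ne_top)

lemma integral_bernoulliReal {θ : ℝ} (h0 : 0 ≤ θ) (h1 : θ ≤ 1) (g : ℝ → ℝ) :
    ∫ x, g x ∂bernoulliReal θ = θ * g 1 + (1 - θ) * g 0 := by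
  rw [bernoulliReal, integral_add_measure
      ((integrable_dirac enorm_lt_top).smul_measure ENNReal.ofReal_ne_top)
      ((integrable_dirac enorm_lt_top).smul_measure ENNReal.ofReal_ne_top),
    integral_smul_measure, integral_smul_measure, integral_dirac, integral_dirac,
    ENNReal.toReal_ofReal h0, ENNReal.toReal_ofReal (by linarith), smul_eq_mul, smul_eq_mul]

lemma isProbabilityMeasure_bgLaw {θ : ℝ} (h0 : 0 ≤ θ) (h1 : θ ≤ 1) (σ2 : ℝ) :
    IsProbabilityMeasure (bgLaw θ σ2) := by
  have := isProbabilityMeasure_bernoulliReal h0 h1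
  exact Measure.isProbabilityMeasure_map (by fun_prop)

lemma integrable_pow_bgLaw (θ σ2 : ℝ) (k : ℕ) : Integrable (fun x => x ^ k) (bgLaw θ σ2) := by
  rw [bgLaw, integrable_map_measure (by fun_prop) (by fun_prop)]
  simpa [Function.comp_def, mul_pow] using
    (integrable_bernoulliReal θ fun b => b ^ k).mul_prod (integrable_pow_gaussianReal _ k)

lemma integral_pow_bgLaw {θ : ℝ} (h0 : 0 ≤ θ) (h1 : θ ≤ 1) (σ2 : ℝ) {k : ℕ} (hk : k ≠ 0) :
    ∫ x, x ^ k ∂bgLaw θ σ2 = θ * ∫ x, x ^ k ∂gaussianReal 0 σ2.toNNReal := by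
  have := isProbabilityMeasure_bernoulliReal h0 h1
  rw [bgLaw, integral_map (by fun_prop) (by fun_prop)]
  simp_rw [mul_pow]
  rw [integral_prod_mul (fun b => b ^ k) fun z => z ^ k, integral_bernoulliReal h0 h1,
    one_pow, zero_pow hk]
  ring

lemma moments_bgLaw {θ σ2 : ℝ} (h0 : 0 ≤ θ) (h1 : θ ≤ 1) (hσ2 : 0 ≤ σ2) :
    ∫ x, x ∂bgLaw θ σ2 = 0 ∧ ∫ x, x ^ 2 ∂bgLaw θ σ2 = θ * σ2 ∧
      ∫ x, x ^ 3 ∂bgLaw θ σ2 = 0 ∧ ∫ x, x ^ 4 ∂bgLaw θ σ2 = 3 * θ * σ2 ^ 2 := by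
  obtain ⟨g2, g3, g4⟩ := moments_gaussianReal_zero σ2.toNNReal
  have hv : (σ2.toNNReal : ℝ) = σ2 := Real.coe_toNNReal _ hσ2
  have h k (hk : k ≠ 0) := integral_pow_bgLaw h0 h1 σ2 hk
  refine ⟨by simpa using h 1 one_ne_zero, ?_, ?_, ?_⟩
  · rw [h 2 two_ne_zero, g2, hv]
  · rw [h 3 three_ne_zero, g3, mul_zero]
  · rw [h 4 four_ne_zero, g4, hv]; ring

section BinomialMoments

variable {α β : Type*} [MeasurableSpace α] [MeasurableSpace β] {μ : Measure α} {ν : Measure β}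
  {f : α → ℝ} {g : β → ℝ}

lemma integrable_add_pow_prod (hf : ∀ k, Integrable (fun x => f x ^ k) μ)
    (hg : ∀ k, Integrable (fun y => g y ^ k) ν) (n : ℕ) :
    Integrable (fun z : α × β => (f z.1 + g z.2) ^ n) (μ.prod ν) := by
  simp_rw [add_pow]
  exact integrable_finsetSum _ fun m _ => ((hf m).mul_prod (hg (n - m))).mul_const _

lemma integral_add_pow_prod [SFinite μ] [SFinite ν] (hf : ∀ k, Integrable (fun x => f x ^ k) μ)
    (hg : ∀ k, Integrable (fun y => g y ^ k) ν) (n : ℕ) :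
    ∫ z, (f z.1 + g z.2) ^ n ∂(μ.prod ν)
      = ∑ m ∈ Finset.range (n + 1),
          (∫ x, f x ^ m ∂μ) * (∫ y, g y ^ (n - m) ∂ν) * n.choose m := by
  simp_rw [add_pow]
  rw [integral_finsetSum _ fun m _ => ((hf m).mul_prod (hg (n - m))).mul_const _]
  refine Finset.sum_congr rfl fun m _ => ?_
  rw [integral_mul_const, integral_prod_mul (fun x => f x ^ m) fun y => g y ^ (n - m)]

end BinomialMoments

section LinearForms

lemma sum_mul_eq_piFinSuccAbove {n : ℕ} (ζ x : Fin (n + 1) → ℝ) :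
    ∑ j, ζ j * x j = ζ 0 * (MeasurableEquiv.piFinSuccAbove (fun _ => ℝ) 0 x).1
      + ∑ i, ζ i.succ * (MeasurableEquiv.piFinSuccAbove (fun _ => ℝ) 0 x).2 i := by
  rw [Fin.sum_univ_succ]
  rfl

lemma integrable_pow_const_mul {μ : Measure ℝ} (hμ : ∀ k, Integrable (fun x => x ^ k) μ)
    (c : ℝ) (k : ℕ) : Integrable (fun x => (c * x) ^ k) μ := by
  simpa [mul_pow] using (hμ k).const_mul (c ^ k)

variable {μ : Measure ℝ} [IsProbabilityMeasure μ]

lemma integrable_pow_sum_mul_pi (hμ : ∀ k, Integrable (fun x => x ^ k) μ) {n : ℕ}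
    (ζ : Fin n → ℝ) (k : ℕ) :
    Integrable (fun x => (∑ j, ζ j * x j) ^ k) (Measure.pi fun _ : Fin n => μ) := by
  induction n generalizing k with
  | zero => simp
  | succ n ih =>
    have e := measurePreserving_piFinSuccAbove (fun _ : Fin (n + 1) => μ) 0
    simp_rw [sum_mul_eq_piFinSuccAbove ζ]
    exact (e.integrable_comp_emb (MeasurableEquiv.measurableEmbedding _)
      (g := fun z : ℝ × (Fin n → ℝ) => (ζ 0 * z.1 + ∑ i, ζ i.succ * z.2 i) ^ k)).2
      (integrable_add_pow_prod (integrable_pow_const_mul hμ _) (ih _) k)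

lemma integral_pow_sum_mul_pi_succ (hμ : ∀ k, Integrable (fun x => x ^ k) μ) {n : ℕ}
    (ζ : Fin (n + 1) → ℝ) (k : ℕ) :
    ∫ x, (∑ j, ζ j * x j) ^ k ∂(Measure.pi fun _ => μ)
      = ∑ m ∈ Finset.range (k + 1), ζ 0 ^ m * (∫ t, t ^ m ∂μ)
          * (∫ y, (∑ i : Fin n, ζ i.succ * y i) ^ (k - m) ∂(Measure.pi fun _ => μ))
          * k.choose m := by
  have e := measurePreserving_piFinSuccAbove (fun _ : Fin (n + 1) => μ) 0
  simp_rw [sum_mul_eq_piFinSuccAbove ζ]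
  rw [e.integral_comp'
      (g := fun z : ℝ × (Fin n → ℝ) => (ζ 0 * z.1 + ∑ i, ζ i.succ * z.2 i) ^ k),
    integral_add_pow_prod (f := fun t => ζ 0 * t) (integrable_pow_const_mul hμ _)
      (integrable_pow_sum_mul_pi hμ _)]
  simp_rw [mul_pow, integral_const_mul]

lemma integral_sq_sum_mul_pi (hμ : ∀ k, Integrable (fun x => x ^ k) μ) (h1 : ∫ x, x ∂μ = 0)
    {n : ℕ} (ζ : Fin n → ℝ) :
    ∫ x, (∑ j, ζ j * x j) ^ 2 ∂(Measure.pi fun _ => μ) = (∫ x, x ^ 2 ∂μ) * ∑ j, ζ j ^ 2 := by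
  induction n with
  | zero => simp
  | succ n ih =>
    rw [integral_pow_sum_mul_pi_succ hμ]
    simp only [Finset.sum_range_succ, Finset.sum_range_zero, Nat.reduceAdd, Nat.reduceSub,
      pow_zero, pow_one, integral_const, probReal_univ, smul_eq_mul, Nat.choose, h1, ih,
      Fin.sum_univ_succ]
    push_cast
    ring

lemma integral_pow_four_sum_mul_pi (hμ : ∀ k, Integrable (fun x => x ^ k) μ)
    (h1 : ∫ x, x ∂μ = 0) (h3 : ∫ x, x ^ 3 ∂μ = 0) {n : ℕ} (ζ : Fin n → ℝ) :
    ∫ x, (∑ j, ζ j * x j) ^ 4 ∂(Measure.pi fun _ => μ)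
      = (∫ x, x ^ 4 ∂μ) * ∑ j, ζ j ^ 4
        + 3 * (∫ x, x ^ 2 ∂μ) ^ 2 * ((∑ j, ζ j ^ 2) ^ 2 - ∑ j, ζ j ^ 4) := by
  induction n with
  | zero => simp
  | succ n ih =>
    rw [integral_pow_sum_mul_pi_succ hμ]
    simp only [Finset.sum_range_succ, Finset.sum_range_zero, Nat.reduceAdd, Nat.reduceSub,
      pow_zero, pow_one, integral_const, probReal_univ, smul_eq_mul, Nat.choose, h1, h3, ih,
      integral_sq_sum_mul_pi hμ h1, Fin.sum_univ_succ]
    push_cast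
    ring

end LinearForms

lemma dotProduct_mulVec_eq_sum_zeta {p r : ℕ} (A : Matrix (Fin p) (Fin r) ℝ) (q : Fin p → ℝ)
    (x : Fin r → ℝ) : q ⬝ᵥ (A *ᵥ x) = ∑ j, zeta A q j * x j := by
  rw [dotProduct_mulVec, zeta, mulVec_transpose]
  rfl

theorem stmt1_general (r : ℕ) (θ σ : ℝ) (hθ0 : 0 < θ) (hθ1 : θ ≤ 1) (hσ : 0 < σ) :
    (∀ ζ : Fin r → ℝ,
      (∫ x : Fin r → ℝ, (∑ j, ζ j * x j) ^ 4 ∂(bgVec r θ (σ ^ 2)))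
        = 3 * σ ^ 4 * θ * ((1 - θ) * l4p4 ζ + θ * (l2sq ζ) ^ 2)) ∧
    (∀ (p : ℕ) (A : Matrix (Fin p) (Fin r) ℝ) (q : Fin p → ℝ), l2sq q = 1 →
      (∫ x : Fin r → ℝ, (-(1 / (12 * θ * σ ^ 4)) * (q ⬝ᵥ (A *ᵥ x)) ^ 4) ∂(bgVec r θ (σ ^ 2)))
        = -(1/4) * ((1 - θ) * l4p4 (zeta A q) + θ * (l2sq (zeta A q)) ^ 2)) := by
  have := isProbabilityMeasure_bgLaw hθ0.le hθ1 (σ ^ 2)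
  obtain ⟨m1, m2, m3, m4⟩ := moments_bgLaw hθ0.le hθ1 (sq_nonneg σ)
  have fourth (ζ : Fin r → ℝ) :
      ∫ x, (∑ j, ζ j * x j) ^ 4 ∂(bgVec r θ (σ ^ 2))
        = 3 * σ ^ 4 * θ * ((1 - θ) * l4p4 ζ + θ * (l2sq ζ) ^ 2) := by
    rw [bgVec, integral_pow_four_sum_mul_pi (integrable_pow_bgLaw θ _) m1 m3, m2, m4, l4p4, l2sq]
    ring
  refine ⟨fourth, fun p A q _ => ?_⟩
  simp_rw [dotProduct_mulVec_eq_sum_zeta]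
  rw [integral_const_mul, fourth]
  field_simp
  ring

theorem stmt1 (r : ℕ) (hr : 1 ≤ r) (θ σ : ℝ) (hθ0 : 0 < θ) (hθ1 : θ ≤ 1) (hσ : 0 < σ) :
    (∀ ζ : Fin r → ℝ,
      (∫ x : Fin r → ℝ, (∑ j, ζ j * x j) ^ 4 ∂(bgVec r θ (σ ^ 2)))
        = 3 * σ ^ 4 * θ * ((1 - θ) * l4p4 ζ + θ * (l2sq ζ) ^ 2)) ∧
    (∀ (p : ℕ) (A : Matrix (Fin p) (Fin r) ℝ) (q : Fin p → ℝ), l2sq q = 1 →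
      (∫ x : Fin r → ℝ, (-(1 / (12 * θ * σ ^ 4)) * (q ⬝ᵥ (A *ᵥ x)) ^ 4) ∂(bgVec r θ (σ ^ 2)))
        = -(1/4) * ((1 - θ) * l4p4 (zeta A q) + θ * (l2sq (zeta A q)) ^ 2)) :=
  stmt1_general r θ σ hθ0 hθ1 hσ

end
end

section
/- Let α > 0 and β ∈ ℝ satisfy 4|β| ≤ α^{3/2}. Then every real root x of the cubic x³ − αx + β = 0 satisfies at least one of: |x| ≤ 2|β|/α, |x − √α| ≤ 2|β|/α, or |x + √α| ≤ 2|β|/α. -/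
open Matrix MeasureTheory ProbabilityTheory Real
open scoped BigOperators ENNReal

noncomputable section

/-! The cubic factors as `x (x - √α) (x + √α) = -β`. Whichever factor is smallest in absolute value,
the other two have product at least `α / 2` in absolute value: for `0 ≤ x ≤ √α / 2` they are
`|x - √α| ≥ √α / 2` and `|x + √α| ≥ √α`, for `x ≥ √α / 2` they are `|x| ≥ √α / 2` and `|x + √α| ≥ √α`,
and negative `x` follow by the symmetry `x ↦ -x`. Hence the smallest factor is at most `2|β| / α`. -/

lemma sq_mul_min_abs_le_of_nonneg {s x : ℝ} (hs : 0 ≤ s) (hx : 0 ≤ x) :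
    s ^ 2 * min |x| |x - s| ≤ 2 * |x * (x - s) * (x + s)| := by
  rw [abs_mul, abs_mul, abs_of_nonneg hx, abs_of_nonneg (by linarith : 0 ≤ x + s)]
  rcases le_total (2 * x) s with h | h
  · have hfar : s ≤ 2 * |x - s| := by rw [abs_of_nonpos (by linarith)]; linarith
    calc s ^ 2 * min x |x - s| ≤ s * s * x := by rw [sq]; gcongr; exact min_le_left _ _
      _ ≤ (2 * |x - s|) * (x + s) * x := by gcongr; linarith
      _ = 2 * (x * |x - s| * (x + s)) := by ring
  · calc s ^ 2 * min x |x - s| ≤ s * s * |x - s| := by rw [sq]; gcongr; exact min_le_right _ _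
      _ ≤ (2 * x) * (x + s) * |x - s| := by gcongr; linarith
      _ = 2 * (x * |x - s| * (x + s)) := by ring

lemma sq_mul_min_abs_le {s : ℝ} (hs : 0 ≤ s) (x : ℝ) :
    s ^ 2 * min |x| (min |x - s| |x + s|) ≤ 2 * |x * (x - s) * (x + s)| := by
  rcases le_total 0 x with hx | hx
  · calc s ^ 2 * min |x| (min |x - s| |x + s|) ≤ s ^ 2 * min |x| |x - s| := by
          gcongr; exact min_le_left _ _
      _ ≤ 2 * |x * (x - s) * (x + s)| := sq_mul_min_abs_le_of_nonneg hs hx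
  · have key := sq_mul_min_abs_le_of_nonneg hs (neg_nonneg.mpr hx)
    have hflip : -x * (-x - s) * (-x + s) = -(x * (x - s) * (x + s)) := by ring
    rw [hflip, abs_neg, abs_neg, ← abs_neg (-x - s), neg_sub, sub_neg_eq_add, add_comm s x] at key
    calc s ^ 2 * min |x| (min |x - s| |x + s|) ≤ s ^ 2 * min |x| |x + s| := by
          gcongr; exact min_le_right _ _
      _ ≤ 2 * |x * (x - s) * (x + s)| := key

theorem stmt8_general (α β x : ℝ) (hα : 0 < α)
    (hx : x ^ 3 - α * x + β = 0) :
    |x| ≤ 2*|β|/α ∨ |x - Real.sqrt α| ≤ 2*|β|/α ∨ |x + Real.sqrt α| ≤ 2*|β|/α := by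
  set s := Real.sqrt α
  have hs2 : s ^ 2 = α := Real.sq_sqrt hα.le
  have hfactor : x * (x - s) * (x + s) = -β := by linear_combination hx - x * hs2
  have key := sq_mul_min_abs_le (Real.sqrt_nonneg α) x
  rw [hs2, hfactor, abs_neg] at key
  have hmin : min |x| (min |x - s| |x + s|) ≤ 2 * |β| / α := by
    rw [le_div_iff₀ hα]; linarith
  simpa only [min_le_iff] using hmin

theorem stmt8 (α β x : ℝ) (hα : 0 < α) (hβ : 4 * |β| ≤ Real.sqrt α ^ 3)
    (hx : x ^ 3 - α * x + β = 0) :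
    |x| ≤ 2*|β|/α ∨ |x - Real.sqrt α| ≤ 2*|β|/α ∨ |x + Real.sqrt α| ≤ 2*|β|/α :=
  stmt8_general α β x hα hx

end
end
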